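/- Let ρ_γ̄ = ν_j({x : φ(x) ≥ γ̄}) and let η = ν_j({x : φ^{(k)}(x) ∈ [γ(ν_j, ρ_γ̄, φ^{(k)}), γ(ν_j, ρ_γ̄, φ^{(k)}) + α]}), where α bounds |φ − φ^{(k)}| on supp(ν_j). If ρ_γ̄ > η, then there exists ρ > 0 such that γ(ν_j, ρ, φ^{(k)}) ≥ γ̄. -/

import Mathlib

/-!
The quantile γ(ν, ρ, ψ) is always attained for ρ > 0: the set of admissible levels is bounded
above because ν(ψ < s) → 1 as s → ∞, and its supremum is admissible because s ↦ ν(ψ < s) is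
left-continuous. Let q = γ(ν, ρ̄, φ_k). Since |φ - φ_k| ≤ α a.e., ν(φ_k < γ̄ - α) ≤ ν(φ < γ̄) = 1 - ρ̄,
so γ̄ - α ≤ q. Attainment gives ν(φ_k ≥ q) ≥ ρ̄, and splitting {φ_k ≥ q} into {φ_k ∈ [q, q + α]}
and {φ_k > q + α} ⊆ {φ_k ≥ γ̄} yields ν(φ_k ≥ γ̄) ≥ ρ̄ - η > 0. Taking ρ = ν(φ_k ≥ γ̄), the level γ̄
is admissible for ρ, hence γ̄ ≤ γ(ν, ρ, φ_k).
-/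

open MeasureTheory

/-- The (1-ρ)-quantile of ψ under ν. -/
noncomputable def quantile {p : ℕ} (ν : Measure (Fin p → ℝ)) (ρ : ℝ)
    (ψ : (Fin p → ℝ) → ℝ) : ℝ :=
  sSup {s : ℝ | (ν {x | ψ x < s}).toReal ≤ 1 - ρ}

open Filter Topology Set

lemma monotone_setOf_lt {Ω : Type*} (ψ : Ω → ℝ) : Monotone fun s : ℝ ↦ {x | ψ x < s} :=
  fun _ _ hst _ hx ↦ lt_of_lt_of_le hx hst

section

variable {Ω : Type*} [MeasurableSpace Ω] {ν : Measure Ω} {ψ : Ω → ℝ}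

lemma tendsto_measureReal_iUnion_atTop [IsFiniteMeasure ν] {ι : Type*} [Preorder ι]
    [IsCountablyGenerated (atTop : Filter ι)] {s : ι → Set Ω} (hs : Monotone s) :
    Tendsto (fun i ↦ ν.real (s i)) atTop (𝓝 (ν.real (⋃ i, s i))) :=
  (ENNReal.tendsto_toReal (measure_ne_top _ _)).comp (tendsto_measure_iUnion_atTop hs)

lemma bddAbove_setOf_measureReal_lt_le [IsProbabilityMeasure ν] {ρ : ℝ} (hρ : 0 < ρ) :
    BddAbove {s : ℝ | ν.real {x | ψ x < s} ≤ 1 - ρ} := by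
  have hunion : (⋃ s : ℝ, {x | ψ x < s}) = univ :=
    eq_univ_of_forall fun x ↦ mem_iUnion.2 (exists_gt (ψ x))
  have hlim := tendsto_measureReal_iUnion_atTop (ν := ν) (monotone_setOf_lt ψ)
  rw [hunion, probReal_univ] at hlim
  obtain ⟨b, hb⟩ := (hlim.eventually (lt_mem_nhds (sub_lt_self 1 hρ))).exists
  refine ⟨b, fun s hs ↦ le_of_not_gt fun hbs ↦ ?_⟩
  have hmono : ν.real {x | ψ x < b} ≤ ν.real {x | ψ x < s} :=
    measureReal_mono (monotone_setOf_lt ψ hbs.le)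
  exact (hb.trans_le hmono).not_ge hs

lemma measureReal_lt_sSup_le [IsFiniteMeasure ν] {c : ℝ} {S : Set ℝ}
    (hne : S.Nonempty) (hbdd : BddAbove S) (hS : ∀ s ∈ S, ν.real {x | ψ x < s} ≤ c) :
    ν.real {x | ψ x < sSup S} ≤ c := by
  obtain ⟨u, hu_mono, hu_lim, hu_mem⟩ := exists_seq_tendsto_sSup hne hbdd
  have hunion : (⋃ n, {x | ψ x < u n}) = {x | ψ x < sSup S} := by
    ext x
    simp only [mem_iUnion, mem_ofPred_eq]
    refine ⟨fun ⟨n, hn⟩ ↦ hn.trans_le (le_csSup hbdd (hu_mem n)), fun hx ↦ ?_⟩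
    exact (hu_lim.eventually (lt_mem_nhds hx)).exists
  have hlim := tendsto_measureReal_iUnion_atTop (ν := ν) ((monotone_setOf_lt ψ).comp hu_mono)
  rw [Function.comp_def, hunion] at hlim
  exact le_of_tendsto' hlim fun n ↦ hS _ (hu_mem n)

lemma measureReal_lt_eq_one_sub [IsProbabilityMeasure ν] (hψ : Measurable ψ) (c : ℝ) :
    ν.real {x | ψ x < c} = 1 - ν.real {x | c ≤ ψ x} := by
  rw [← probReal_compl_eq_one_sub (measurableSet_le measurable_const hψ)]
  simp only [compl_ofPred, not_le]

lemma measureReal_lt_sub_le_of_ae_abs_sub_le [IsFiniteMeasure ν] {φ : Ω → ℝ} {α γ : ℝ}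
    (herr : ∀ᵐ x ∂ν, |φ x - ψ x| ≤ α) :
    ν.real {x | ψ x < γ - α} ≤ ν.real {x | φ x < γ} := by
  refine ENNReal.toReal_mono (measure_ne_top _ _) (measure_mono_ae ?_)
  filter_upwards [herr] with x hx hψx
  change ψ x < γ - α at hψx
  change φ x < γ
  linarith [(abs_le.mp hx).2]

lemma measureReal_le_le_add_of_le_add [IsFiniteMeasure ν] {q α γ : ℝ} (hγ : γ ≤ q + α) :
    ν.real {x | q ≤ ψ x} ≤ ν.real {x | ψ x ∈ Icc q (q + α)} + ν.real {x | γ ≤ ψ x} := by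
  have hcover : {x | q ≤ ψ x} ⊆ {x | ψ x ∈ Icc q (q + α)} ∪ {x | γ ≤ ψ x} := fun x hx ↦
    (le_or_gt (ψ x) (q + α)).imp (fun h ↦ ⟨hx, h⟩) fun h ↦ hγ.trans h.le
  exact (measureReal_mono hcover).trans (measureReal_union_le _ _)

end

section

variable {p : ℕ} {ν : Measure (Fin p → ℝ)} [IsProbabilityMeasure ν] {ψ : (Fin p → ℝ) → ℝ}
  {ρ s : ℝ}

lemma le_quantile (hρ : 0 < ρ) (hs : ν.real {x | ψ x < s} ≤ 1 - ρ) : s ≤ quantile ν ρ ψ :=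
  le_csSup (bddAbove_setOf_measureReal_lt_le hρ) hs

lemma measureReal_lt_quantile_le (hρ : 0 < ρ) (hs : ν.real {x | ψ x < s} ≤ 1 - ρ) :
    ν.real {x | ψ x < quantile ν ρ ψ} ≤ 1 - ρ :=
  measureReal_lt_sSup_le ⟨s, hs⟩ (bddAbove_setOf_measureReal_lt_le hρ) fun _ h ↦ h

end

theorem stmt9_general {p : ℕ} (ν : Measure (Fin p → ℝ)) [IsProbabilityMeasure ν]
    (φ φk : (Fin p → ℝ) → ℝ) (hφ : Measurable φ) (hφk : Measurable φk)
    (α : ℝ)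
    (herr : ∀ᵐ x ∂ν, |φ x - φk x| ≤ α)
    (γbar : ℝ)
    (ρbar : ℝ) (hρbar : ρbar = (ν {x | γbar ≤ φ x}).toReal)
    (η : ℝ)
    (hη : η = (ν {x | φk x ∈ Set.Icc (quantile ν ρbar φk) (quantile ν ρbar φk + α)}).toReal)
    (hlt : η < ρbar) :
    ∃ ρ > (0 : ℝ), γbar ≤ quantile ν ρ φk := by
  rw [← measureReal_def] at hρbar hη
  have hρbar_pos : 0 < ρbar := hlt.trans_le' (hη ▸ measureReal_nonneg)
  have hlow : ν.real {x | φk x < γbar - α} ≤ 1 - ρbar := by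
    calc ν.real {x | φk x < γbar - α} ≤ ν.real {x | φ x < γbar} :=
          measureReal_lt_sub_le_of_ae_abs_sub_le herr
      _ = 1 - ρbar := by rw [measureReal_lt_eq_one_sub hφ, hρbar]
  set q := quantile ν ρbar φk
  have hq_ge : γbar - α ≤ q := le_quantile hρbar_pos hlow
  have hq_tail : ρbar ≤ ν.real {x | q ≤ φk x} := by
    linarith [measureReal_lt_quantile_le hρbar_pos hlow, measureReal_lt_eq_one_sub (ν := ν) hφk q]
  have hcover := measureReal_le_le_add_of_le_add (ν := ν) (ψ := φk) (show γbar ≤ q + α by linarith)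
  refine ⟨ν.real {x | γbar ≤ φk x}, by linarith, le_quantile (by linarith) ?_⟩
  exact (measureReal_lt_eq_one_sub hφk γbar).le

/-- Sufficient condition for quantile increase (Lemma, Appendix A): if
ρ_γ̄ = ν(φ ≥ γ̄) exceeds the probability η that the approximated score falls in the
interval [γ(ν,ρ_γ̄,φ^{(k)}), γ(ν,ρ_γ̄,φ^{(k)}) + α], then there exists ρ > 0 with
γ(ν,ρ,φ^{(k)}) ≥ γ̄. -/
theorem stmt9 {p : ℕ} (ν : Measure (Fin p → ℝ)) [IsProbabilityMeasure ν]
    (φ φk : (Fin p → ℝ) → ℝ) (hφ : Measurable φ) (hφk : Measurable φk)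
    (α : ℝ) (hα : 0 ≤ α)
    (herr : ∀ᵐ x ∂ν, |φ x - φk x| ≤ α)
    (γbar : ℝ)
    (ρbar : ℝ) (hρbar : ρbar = (ν {x | γbar ≤ φ x}).toReal)
    (η : ℝ)
    (hη : η = (ν {x | φk x ∈ Set.Icc (quantile ν ρbar φk) (quantile ν ρbar φk + α)}).toReal)
    (hatt : ∀ ρ ∈ Set.Ioo (0 : ℝ) 1,
      IsGreatest {s : ℝ | (ν {x | φk x < s}).toReal ≤ 1 - ρ} (quantile ν ρ φk))
    (hlt : η < ρbar) :
    ∃ ρ > (0 : ℝ), γbar ≤ quantile ν ρ φk :=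
  stmt9_general ν φ φk hφ hφk α herr γbar ρbar hρbar η hη hlt
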